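/- The function q ↦ ∑_{k,r≥0} (-1)^k (1+2r)(1+r+k) q^{k²+2kr+2k+r}, i.e. the m=1 Kac–Wakimoto series, has the property that its lowest-order term is q⁰ with coefficient 1, and more generally for arbitrary m the series KW-sum ∑ over x_j ∈ ℤ_{>0}, y_j ∈ 1/2+ℤ_{≥0}, x_j > y_j of (2^m/(m!(∏_j(2j-1)!)²)) V_m(x,y) ∏_j q^{(x_j²-y_j²)/2}(-1)^{x_j-y_j-1/2} has lowest exponent m(2m+1)/8 with coefficient 1. -/

import Mathlib

open Nat

/-- `V_m(x,y) = ∏_{i<j}(x_i²-x_j²)(y_i²-y_j²) · ∏_j x_j y_j` with real arguments. -/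
noncomputable def VR (m : ℕ) (x y : Fin m → ℝ) : ℝ :=
  (∏ i : Fin m, ∏ j ∈ Finset.univ.filter (fun j => i < j),
      ((x i ^ 2 - x j ^ 2) * (y i ^ 2 - y j ^ 2))) *
    ∏ j : Fin m, x j * y j

/-- The cone of summation: `x_j ∈ ℤ_{>0}`, `y_j = y'_j + 1/2` with `y'_j ∈ ℤ_{≥0}`
and `x_j > y_j`, parametrized by pairs of tuples of naturals with `y'_j < x_j`. -/
def KWCone (m : ℕ) := {p : (Fin m → ℕ) × (Fin m → ℕ) // ∀ j, p.2 j < p.1 j}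

/-- The coefficient `(2^m/(m!(∏_j(2j-1)!)²)) V_m(x,y) ∏_j (-1)^{x_j-y_j-1/2}`. -/
noncomputable def KWcoeff (m : ℕ) (p : KWCone m) : ℝ :=
  ((2 : ℝ) ^ m / ((m ! * (∏ j ∈ Finset.range m, (2 * (j + 1) - 1)!) ^ 2 : ℕ) : ℝ)) *
    VR m (fun j => (p.val.1 j : ℝ)) (fun j => (p.val.2 j : ℝ) + 1 / 2) *
    ∏ j : Fin m, (-1 : ℝ) ^ (p.val.1 j - p.val.2 j - 1)

/-- The exponent `(1/2) ∑_j (x_j² - y_j²)`. -/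
noncomputable def KWexp (m : ℕ) (p : KWCone m) : ℝ :=
  (1 / 2) * ∑ j : Fin m, (((p.val.1 j : ℝ)) ^ 2 - ((p.val.2 j : ℝ) + 1 / 2) ^ 2)

/-!
Write `x_j = u_j + 1`. For `0 ≤ y ≤ u` each term satisfies
`(u+1)² - (y+½)² = u + ¾ + (u-y)(u+y+1) ≥ u + ¾`, with equality iff `y = u`. A nonzero coefficient
forces `V_m ≠ 0`, so the `u_j` are distinct naturals and `∑ u_j ≥ 0 + 1 + ⋯ + (m-1)`, with
equality iff `{u_j} = {0, …, m-1}`. Hence the exponent is at least `∑_{j<m} (j + ¾)/2 = m(2m+1)/8`,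
attained exactly at the `m!` points `(x, y) = (σ j + 1, σ j + ½)`. Writing `V_m` as a product of
two Vandermonde determinants in `x_j²` and `y_j²` shows it is invariant under simultaneous
permutation, and an induction on `m` evaluates it at `(j + 1, j + ½)` to `(∏_j (2j+1)!)² / 2^m`,
so each of these points contributes `1/m!`.
-/

open Finset Matrix

lemma VR_eq_det_vandermonde_mul {m : ℕ} (x y : Fin m → ℝ) :
    VR m x y = (vandermonde fun i => x i ^ 2).det * (vandermonde fun i => y i ^ 2).det *
      ∏ j, x j * y j := by
  rw [VR, det_vandermonde, det_vandermonde]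
  congr 1
  rw [← prod_mul_distrib]
  refine prod_congr rfl fun i _ => ?_
  rw [filter_lt_eq_Ioi, ← prod_mul_distrib]
  exact prod_congr rfl fun j _ => by ring

lemma VR_comp_perm {m : ℕ} (x y : Fin m → ℝ) (σ : Equiv.Perm (Fin m)) :
    VR m (x ∘ σ) (y ∘ σ) = VR m x y := by
  have hdet (v : Fin m → ℝ) : (vandermonde fun i => v (σ i) ^ 2).det =
      ((Equiv.Perm.sign σ : ℤ) : ℝ) * (vandermonde fun i => v i ^ 2).det :=
    det_permute σ (vandermonde fun i => v i ^ 2)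
  have hsign : ((Equiv.Perm.sign σ : ℤ) : ℝ) * (Equiv.Perm.sign σ : ℤ) = 1 := by
    rw [← Int.cast_mul, ← Units.val_mul, Int.units_mul_self, Units.val_one, Int.cast_one]
  simp only [VR_eq_det_vandermonde_mul, Function.comp_apply, hdet,
    Equiv.prod_comp σ (fun j => x j * y j)]
  linear_combination (vandermonde fun i => x i ^ 2).det * (vandermonde fun i => y i ^ 2).det *
    (∏ j, x j * y j) * hsign

lemma VR_eq_zero_of_sq_eq {m : ℕ} (x y : Fin m → ℝ) {a b : Fin m} (hab : a ≠ b)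
    (h : x a ^ 2 = x b ^ 2) : VR m x y = 0 := by
  rw [VR_eq_det_vandermonde_mul, det_vandermonde_eq_zero_iff.mpr ⟨a, b, h, hab⟩, zero_mul,
    zero_mul]

lemma VR_succ {m : ℕ} (x y : Fin (m + 1) → ℝ) :
    VR (m + 1) x y = VR m (x ∘ Fin.castSucc) (y ∘ Fin.castSucc) *
      ((∏ i : Fin m, (x i.castSucc ^ 2 - x (Fin.last m) ^ 2) *
        (y i.castSucc ^ 2 - y (Fin.last m) ^ 2)) * (x (Fin.last m) * y (Fin.last m))) := by
  simp only [VR, prod_filter, Fin.prod_univ_castSucc, Fin.castSucc_lt_castSucc_iff,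
    Fin.castSucc_lt_last, fun i : Fin m => (Fin.castSucc_lt_last i).not_gt, if_true, if_false,
    Function.comp_apply, lt_irrefl, prod_const_one, mul_one, prod_mul_distrib]
  ring

lemma prod_range_sub_sq_mul_mul_eq_factorial_sq (m : ℕ) :
    (∏ i ∈ range m, ((m - i) ^ 2 * ((m + 1 + i) * (m + 2 + i)))) * ((m + 1) * (2 * m + 1)) =
      (2 * m + 1)! ^ 2 := by
  rw [prod_mul_distrib, prod_mul_distrib, prod_pow, ← descFactorial_eq_prod_range,
    descFactorial_self, ← ascFactorial_eq_prod_range, ← ascFactorial_eq_prod_range]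
  calc _ = (m ! * (m + 1).ascFactorial m) * ((m + 1)! * (m + 2).ascFactorial m) * (2 * m + 1) := by
        rw [factorial_succ]; ring
    _ = (2 * m)! * (2 * m + 1)! * (2 * m + 1) := by
        rw [factorial_mul_ascFactorial, factorial_mul_ascFactorial, two_mul, add_right_comm]
    _ = _ := by rw [factorial_succ (2 * m)]; ring

lemma prod_sq_sub_sq_mul_sq_sub_sq_eq_factorial_sq (m : ℕ) :
    (∏ i : Fin m, (((i : ℝ) + 1) ^ 2 - ((m : ℝ) + 1) ^ 2) *
      (((i : ℝ) + 1 / 2) ^ 2 - ((m : ℝ) + 1 / 2) ^ 2)) *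
        (((m : ℝ) + 1) * ((m : ℝ) + 1 / 2)) * 2 = ((2 * m + 1)! : ℝ) ^ 2 := by
  rw [Fin.prod_univ_eq_prod_range (fun i => (((i : ℝ) + 1) ^ 2 - ((m : ℝ) + 1) ^ 2) *
    (((i : ℝ) + 1 / 2) ^ 2 - ((m : ℝ) + 1 / 2) ^ 2)), ← Nat.cast_pow,
    ← prod_range_sub_sq_mul_mul_eq_factorial_sq]
  have hfactor (i) (hi : i ∈ range m) : (((i : ℝ) + 1) ^ 2 - ((m : ℝ) + 1) ^ 2) *
      (((i : ℝ) + 1 / 2) ^ 2 - ((m : ℝ) + 1 / 2) ^ 2) =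
        (((m - i) ^ 2 * ((m + 1 + i) * (m + 2 + i)) : ℕ) : ℝ) := by
    push_cast [Nat.cast_sub (mem_range.mp hi).le]
    ring
  rw [prod_congr rfl hfactor]
  push_cast
  ring

lemma VR_add_one_add_half_mul_two_pow (m : ℕ) :
    VR m (fun j => (j : ℝ) + 1) (fun j => (j : ℝ) + 1 / 2) * 2 ^ m =
      (∏ j ∈ range m, ((2 * j + 1)! : ℝ)) ^ 2 := by
  induction m with
  | zero => simp [VR]
  | succ m ih =>
    rw [VR_succ]
    simp only [Function.comp_def, Fin.val_castSucc, Fin.val_last]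
    rw [prod_range_succ, mul_pow, pow_succ (2 : ℝ) m, ← ih,
      ← prod_sq_sub_sq_mul_sq_sub_sq_eq_factorial_sq]
    ring

lemma Finset.sum_range_card_add_card_sdiff_le_sum (S : Finset ℕ) :
    ∑ i ∈ range #S, i + #(S \ range #S) ≤ ∑ i ∈ S, i := by
  set T := range #S
  -- `S \ T` and `T \ S` have the same size, and every element of the first exceeds every
  -- element of the second.
  have hcard : #(T \ S) = #(S \ T) := card_sdiff_comm (card_range _)
  have hS : ∑ i ∈ S \ T, i + ∑ i ∈ S ∩ T, i = ∑ i ∈ S, i := by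
    rw [← sdiff_inter_self_left, sum_sdiff inter_subset_left]
  have hT : ∑ i ∈ T \ S, i + ∑ i ∈ S ∩ T, i = ∑ i ∈ T, i := by
    rw [inter_comm, ← sdiff_inter_self_left, sum_sdiff inter_subset_left]
  have hlarge : #(S \ T) * #S ≤ ∑ i ∈ S \ T, i := by
    simpa using card_nsmul_le_sum (S \ T) id #S fun i hi => by
      simpa [T] using (mem_sdiff.mp hi).2
  have hsmall : ∑ i ∈ T \ S, (i + 1) ≤ #(T \ S) * #S := by
    simpa using sum_le_card_nsmul (T \ S) (· + 1) #S fun i hi => by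
      simpa [T] using (mem_sdiff.mp hi).1
  rw [sum_add_distrib, sum_const, smul_eq_mul, mul_one, hcard] at hsmall
  omega

lemma sum_range_add_card_sdiff_le_sum_of_injective {m : ℕ} {u : Fin m → ℕ}
    (hu : Function.Injective u) :
    ∑ i ∈ range m, i + #(univ.image u \ range m) ≤ ∑ j, u j := by
  have hcard : #(univ.image u) = m := by
    rw [card_image_of_injective _ hu, Finset.card_fin]
  simpa [hcard, sum_image hu.injOn] using (univ.image u).sum_range_card_add_card_sdiff_le_sum

lemma sum_range_add_three_quarters (m : ℕ) :
    ∑ i ∈ range m, ((i : ℝ) + 3 / 4) = m * (2 * m + 1) / 4 := by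
  induction m with
  | zero => simp
  | succ m ih => rw [sum_range_succ, ih]; push_cast; ring

namespace KWCone

variable {m : ℕ} (p : KWCone m)

def fstPred (j : Fin m) : ℕ := p.val.1 j - 1

lemma fst_eq_fstPred_add_one (j : Fin m) : p.val.1 j = p.fstPred j + 1 := by
  have := p.prop j
  rw [fstPred]
  omega

lemma fstPred_add_three_quarters_le (j : Fin m) :
    (p.fstPred j : ℝ) + 3 / 4 ≤ (p.val.1 j : ℝ) ^ 2 - ((p.val.2 j : ℝ) + 1 / 2) ^ 2 := by
  have hy : (p.val.2 j : ℝ) ≤ p.fstPred j := by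
    exact_mod_cast Nat.le_of_lt_succ (p.fst_eq_fstPred_add_one j ▸ p.prop j)
  rw [p.fst_eq_fstPred_add_one j]
  push_cast
  nlinarith [(p.val.2 j).cast_nonneg (α := ℝ)]

lemma snd_eq_fstPred_of_eq (j : Fin m)
    (h : (p.val.1 j : ℝ) ^ 2 - ((p.val.2 j : ℝ) + 1 / 2) ^ 2 = (p.fstPred j : ℝ) + 3 / 4) :
    p.val.2 j = p.fstPred j := by
  rw [p.fst_eq_fstPred_add_one j] at h
  push_cast at h
  have : ((p.fstPred j : ℝ) - p.val.2 j) * (p.fstPred j + p.val.2 j + 1) = 0 := by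
    linear_combination h
  rcases mul_eq_zero.mp this with h | h
  · exact_mod_cast (sub_eq_zero.mp h).symm
  · nlinarith [(p.val.2 j).cast_nonneg (α := ℝ), (p.fstPred j).cast_nonneg (α := ℝ)]

lemma sum_fstPred_add_three_quarters_le :
    ∑ j, ((p.fstPred j : ℝ) + 3 / 4) ≤ 2 * KWexp m p := by
  rw [KWexp, ← mul_assoc, mul_one_div_cancel two_ne_zero, one_mul]
  exact sum_le_sum fun j _ => p.fstPred_add_three_quarters_le j

lemma le_sum_fstPred_add_three_quarters (hinj : Function.Injective p.fstPred) :
    m * (2 * m + 1) / 4 + #(univ.image p.fstPred \ range m) ≤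
      ∑ j, ((p.fstPred j : ℝ) + 3 / 4) := by
  have h : ((∑ i ∈ range m, i + #(univ.image p.fstPred \ range m) : ℕ) : ℝ) ≤
      ((∑ j, p.fstPred j : ℕ) : ℝ) := by
    exact_mod_cast sum_range_add_card_sdiff_le_sum_of_injective hinj
  rw [← sum_range_add_three_quarters]
  simp only [sum_add_distrib, sum_const, card_range, Finset.card_fin, nsmul_eq_mul]
  push_cast at h
  linarith

lemma le_KWexp (hinj : Function.Injective p.fstPred) : m * (2 * m + 1) / 8 ≤ KWexp m p := by
  linarith [p.le_sum_fstPred_add_three_quarters hinj, p.sum_fstPred_add_three_quarters_le,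
    (#(univ.image p.fstPred \ range m)).cast_nonneg (α := ℝ)]

lemma injective_fstPred_of_KWcoeff_ne_zero (h : KWcoeff m p ≠ 0) :
    Function.Injective p.fstPred := by
  intro a b hab
  by_contra hne
  have hx : (p.val.1 a : ℝ) ^ 2 = (p.val.1 b : ℝ) ^ 2 := by
    rw [p.fst_eq_fstPred_add_one a, p.fst_eq_fstPred_add_one b, hab]
  exact h (by rw [KWcoeff, VR_eq_zero_of_sq_eq _ _ hne hx, mul_zero, zero_mul])

def ofPerm (σ : Equiv.Perm (Fin m)) : KWCone m :=
  ⟨(fun j => σ j + 1, fun j => σ j), fun _ => Nat.lt_succ_self _⟩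

lemma ofPerm_injective : Function.Injective (ofPerm (m := m)) := by
  intro σ τ h
  ext j
  simpa [ofPerm] using congr_fun (congr_arg (fun p : KWCone m => p.val.1) h) j

lemma exists_ofPerm_eq_of_KWexp_eq (hinj : Function.Injective p.fstPred)
    (he : KWexp m p = m * (2 * m + 1) / 8) : ∃ σ, ofPerm σ = p := by
  have hlow := p.le_sum_fstPred_add_three_quarters hinj
  have hup := p.sum_fstPred_add_three_quarters_le
  have hsnd : ∀ j, p.val.2 j = p.fstPred j := by
    have hsum : ∑ j, ((p.fstPred j : ℝ) + 3 / 4) =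
        ∑ j, ((p.val.1 j : ℝ) ^ 2 - ((p.val.2 j : ℝ) + 1 / 2) ^ 2) := by
      rw [KWexp] at he hup
      linarith [(#(univ.image p.fstPred \ range m)).cast_nonneg (α := ℝ)]
    intro j
    exact p.snd_eq_fstPred_of_eq j ((sum_eq_sum_iff_of_le fun j _ =>
      p.fstPred_add_three_quarters_le j).mp hsum j (mem_univ j)).symm
  have hlt : ∀ j, p.fstPred j < m := by
    have hcard : #(univ.image p.fstPred \ range m) = 0 := by
      have : (#(univ.image p.fstPred \ range m) : ℝ) ≤ 0 := by linarith
      exact_mod_cast this.antisymm (Nat.cast_nonneg _)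
    intro j
    simpa using sdiff_eq_empty_iff_subset.mp (card_eq_zero.mp hcard)
      (mem_image_of_mem _ (mem_univ j))
  let σ : Equiv.Perm (Fin m) := Equiv.ofBijective (fun j => ⟨p.fstPred j, hlt j⟩)
    (Finite.injective_iff_bijective.mp fun a b h => hinj (Fin.val_eq_of_eq h))
  refine ⟨σ, Subtype.ext (Prod.ext (funext fun j => ?_) (funext fun j => ?_))⟩
  · exact (p.fst_eq_fstPred_add_one j).symm
  · exact (hsnd j).symm

lemma KWexp_ofPerm (σ : Equiv.Perm (Fin m)) : KWexp m (ofPerm σ) = m * (2 * m + 1) / 8 := by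
  have hterm (j : Fin m) : ((σ j + 1 : ℕ) : ℝ) ^ 2 - ((σ j : ℕ) + 1 / 2 : ℝ) ^ 2 =
      ((σ j : ℕ) : ℝ) + 3 / 4 := by
    push_cast; ring
  simp only [KWexp, ofPerm, hterm]
  rw [Equiv.sum_comp σ (fun k : Fin m => ((k : ℕ) : ℝ) + 3 / 4),
    Fin.sum_univ_eq_sum_range (fun k => (k : ℝ) + 3 / 4), sum_range_add_three_quarters]
  ring

lemma KWcoeff_ofPerm (σ : Equiv.Perm (Fin m)) : KWcoeff m (ofPerm σ) = 1 / m ! := by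
  have hVR : VR m (fun j => ((σ j + 1 : ℕ) : ℝ)) (fun j => ((σ j : ℕ) : ℝ) + 1 / 2) =
      (∏ j ∈ range m, ((2 * (j + 1) - 1)! : ℝ)) ^ 2 / 2 ^ m := by
    have hodd (j : ℕ) : 2 * (j + 1) - 1 = 2 * j + 1 := by omega
    rw [eq_div_iff (by positivity)]
    simp only [hodd, ← VR_add_one_add_half_mul_two_pow]
    push_cast
    exact congr_arg (· * _) (VR_comp_perm (fun j => (j : ℝ) + 1) (fun j => (j : ℝ) + 1 / 2) σ)
  have hP : (∏ j ∈ range m, ((2 * (j + 1) - 1)! : ℝ)) ≠ 0 :=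
    prod_ne_zero_iff.mpr fun j _ => by positivity
  simp only [KWcoeff, ofPerm, hVR, Nat.add_sub_cancel_left, Nat.sub_self, pow_zero, prod_const_one,
    mul_one]
  push_cast
  field_simp

end KWCone

theorem kac_wakimoto_lowest_term_general (m : ℕ) :
    ((∑' p : {p : ℕ × ℕ // p.1 ^ 2 + 2 * p.1 * p.2 + 2 * p.1 + p.2 = 0},
        ((-1 : ℝ) ^ p.val.1 * ((1 + 2 * p.val.2 : ℕ) : ℝ) *
          ((1 + p.val.2 + p.val.1 : ℕ) : ℝ))) = 1) ∧
    (∀ p : KWCone m, KWcoeff m p ≠ 0 → ((m : ℝ) * (2 * m + 1)) / 8 ≤ KWexp m p) ∧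
    ((∑' p : {p : KWCone m // KWexp m p = ((m : ℝ) * (2 * m + 1)) / 8},
        KWcoeff m p.val) = 1) := by
  refine ⟨?_, fun p hp => p.le_KWexp (p.injective_fstPred_of_KWcoeff_ne_zero hp), ?_⟩
  · have hzero (q : {p : ℕ × ℕ // p.1 ^ 2 + 2 * p.1 * p.2 + 2 * p.1 + p.2 = 0}) :
        q = ⟨(0, 0), rfl⟩ := by
      obtain ⟨⟨k, r⟩, h⟩ := q
      obtain ⟨rfl, rfl⟩ : k = 0 ∧ r = 0 := by simp at h; tauto
      rfl
    rw [tsum_eq_single ⟨(0, 0), rfl⟩ fun q hq => absurd (hzero q) hq]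
    norm_num
  · let g (σ : Equiv.Perm (Fin m)) : {p : KWCone m // KWexp m p = m * (2 * m + 1) / 8} :=
      ⟨KWCone.ofPerm σ, KWCone.KWexp_ofPerm σ⟩
    have hg : Function.Injective g := fun σ τ h =>
      KWCone.ofPerm_injective (congr_arg Subtype.val h)
    have hsupp : Function.support (fun p => KWcoeff m p.val) ⊆ Set.range g := fun p hp => by
      obtain ⟨σ, hσ⟩ := p.val.exists_ofPerm_eq_of_KWexp_eq
        (p.val.injective_fstPred_of_KWcoeff_ne_zero hp) p.prop
      exact ⟨σ, Subtype.ext hσ⟩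
    rw [← hg.tsum_eq hsupp, tsum_fintype]
    simp only [g, KWCone.KWcoeff_ofPerm, sum_const, Finset.card_univ, Fintype.card_perm,
      Fintype.card_fin, nsmul_eq_mul]
    field_simp

/-- The lowest-order term of the `m = 1` Kac–Wakimoto series is `q⁰` with coefficient `1`,
and in general the Kac–Wakimoto cone sum has lowest exponent `m(2m+1)/8` with
coefficient `1`. -/
theorem kac_wakimoto_lowest_term (m : ℕ) (hm : 0 < m) :
    ((∑' p : {p : ℕ × ℕ // p.1 ^ 2 + 2 * p.1 * p.2 + 2 * p.1 + p.2 = 0},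
        ((-1 : ℝ) ^ p.val.1 * ((1 + 2 * p.val.2 : ℕ) : ℝ) *
          ((1 + p.val.2 + p.val.1 : ℕ) : ℝ))) = 1) ∧
    (∀ p : KWCone m, KWcoeff m p ≠ 0 → ((m : ℝ) * (2 * m + 1)) / 8 ≤ KWexp m p) ∧
    ((∑' p : {p : KWCone m // KWexp m p = ((m : ℝ) * (2 * m + 1)) / 8},
        KWcoeff m p.val) = 1) :=
  kac_wakimoto_lowest_term_general m
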